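/- arXiv:2501.08132 — 3 statements merged into one kernel-verified Lean document; each statement's English description precedes it below -/
import Mathlib

section
/- Let U be a domain in ℂ and v : U → ℂ a holomorphic function. The Wronskian of the curve f = (1, v/1!, v²/2!, ..., vⁿ/n!) equals (v')^{n(n+1)/2}. -/
open Finset

noncomputable def bellW (v : ℂ → ℂ) : ℕ → ℕ → ℂ → ℂ
  | 0, 0 => fun _ => 1
  | 0, _ + 1 => fun _ => 0
  | i + 1, 0 => deriv (bellW v i 0)
  | i + 1, k + 1 => deriv (bellW v i (k + 1)) + bellW v i k * deriv v

lemma bellW_zero (v : ℂ → ℂ) : ∀ i k, i < k → bellW v i k = fun _ => 0 := by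
  intro i
  induction i with
  | zero =>
    intro k hk
    match k, hk with
    | k + 1, _ => rfl
  | succ i ih =>
    intro k hk
    match k, hk with
    | k + 1, hk =>
      show deriv (bellW v i (k + 1)) + bellW v i k * deriv v = _
      rw [ih (k + 1) (by omega), ih k (by omega)]
      funext w
      simp

lemma bellW_diag (v : ℂ → ℂ) : ∀ i w, bellW v i i w = (deriv v w) ^ i := by
  intro i
  induction i with
  | zero => intro w; simp [bellW]
  | succ i ih =>
    intro w
    show (deriv (bellW v i (i + 1)) + bellW v i i * deriv v) w = _
    rw [bellW_zero v i (i + 1) (by omega)]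
    simp [ih w, pow_succ]

lemma bellW_analytic {U : Set ℂ} (hU : IsOpen U) {v : ℂ → ℂ}
    (hv : DifferentiableOn ℂ v U) : ∀ i k, AnalyticOnNhd ℂ (bellW v i k) U := by
  have hva : AnalyticOnNhd ℂ v U := hv.analyticOnNhd hU
  intro i
  induction i with
  | zero =>
    intro k
    match k with
    | 0 => exact analyticOnNhd_const
    | k + 1 => exact analyticOnNhd_const
  | succ i ih =>
    intro k
    match k with
    | 0 => exact (ih 0).deriv_of_isOpen hU
    | k + 1 => exact ((ih (k + 1)).deriv_of_isOpen hU).add ((ih k).mul (hva.deriv_of_isOpen hU))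
open Finset

noncomputable def gpow (j k : ℕ) : ℂ → ℂ := fun t =>
  if k ≤ j then t ^ (j - k) / ((j - k).factorial : ℂ) else 0

lemma gpow_of_le {j k : ℕ} (h : k ≤ j) :
    gpow j k = fun t => t ^ (j - k) / ((j - k).factorial : ℂ) := by
  funext t
  show (if k ≤ j then t ^ (j - k) / ((j - k).factorial : ℂ) else 0) = _
  rw [if_pos h]

lemma gpow_of_gt {j k : ℕ} (h : j < k) : gpow j k = fun _ => (0 : ℂ) := by
  funext t
  show (if k ≤ j then t ^ (j - k) / ((j - k).factorial : ℂ) else 0) = _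
  rw [if_neg (Nat.not_le.mpr h)]

lemma gpow_diff (j k : ℕ) : Differentiable ℂ (gpow j k) := by
  by_cases h : k ≤ j
  · rw [gpow_of_le h]
    exact (differentiable_pow _).div_const _
  · rw [gpow_of_gt (Nat.not_le.mp h)]
    exact differentiable_const 0

lemma gpow_deriv (j k : ℕ) : deriv (gpow j k) = gpow j (k + 1) := by
  rcases lt_trichotomy k j with h | h | h
  · have h1 : k + 1 ≤ j := h
    obtain ⟨m, hm⟩ : ∃ m, j - k = m + 1 := ⟨j - (k + 1), by omega⟩
    have hjk1 : j - (k + 1) = m := by omega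
    rw [gpow_of_le h.le, gpow_of_le h1, hm, hjk1]
    funext t
    rw [deriv_div_const, deriv_pow_field, Nat.add_sub_cancel, Nat.cast_add_one]
    have he : ((m + 1).factorial : ℂ) = (m + 1) * (m.factorial : ℂ) := by
      rw [Nat.factorial_succ]; push_cast; ring
    have h2 : ((m : ℂ) + 1) ≠ 0 := Nat.cast_add_one_ne_zero m
    have h3 : (m.factorial : ℂ) ≠ 0 := by
      exact_mod_cast Nat.factorial_ne_zero m
    rw [he]
    field_simp
  · subst h
    have h1 : gpow k k = fun _ => (1 : ℂ) := by
      rw [gpow_of_le le_rfl]; funext t; simp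
    rw [h1, gpow_of_gt (by omega)]
    funext t
    simp
  · rw [gpow_of_gt h, gpow_of_gt (by omega)]
    funext t
    simp

lemma faa {U : Set ℂ} (hU : IsOpen U) {v : ℂ → ℂ} (hv : DifferentiableOn ℂ v U)
    (G : ℕ → ℂ → ℂ) (hGd : ∀ k, Differentiable ℂ (G k))
    (hG : ∀ k, deriv (G k) = G (k + 1)) :
    ∀ i, ∀ w ∈ U, iteratedDeriv i (fun x => G 0 (v x)) w
      = ∑ k ∈ range (i + 1), bellW v i k w * G k (v w) := by
  intro i
  induction i with
  | zero =>
    intro w hw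
    simp [bellW]
  | succ i ih =>
    intro w hw
    rw [iteratedDeriv_succ]
    have heq : deriv (iteratedDeriv i fun x => G 0 (v x)) w
        = deriv (fun x => ∑ k ∈ range (i + 1), bellW v i k x * G k (v x)) w := by
      apply Filter.EventuallyEq.deriv_eq
      filter_upwards [hU.mem_nhds hw] with x hx using ih x hx
    rw [heq]
    have hB : ∀ k, DifferentiableAt ℂ (bellW v i k) w := fun k =>
      ((bellW_analytic hU hv i k) w hw).differentiableAt
    have hvw : DifferentiableAt ℂ v w := hv.differentiableAt (hU.mem_nhds hw)
    have hterm : ∀ k, DifferentiableAt ℂ (fun x => bellW v i k x * G k (v x)) w := fun k =>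
      (hB k).mul (((hGd k).differentiableAt).comp w hvw)
    rw [deriv_fun_sum (fun k _ => hterm k)]
    have hder : ∀ k, deriv (fun x => bellW v i k x * G k (v x)) w
        = deriv (bellW v i k) w * G k (v w) + bellW v i k w * (G (k + 1) (v w) * deriv v w) := by
      intro k
      have h3 : HasDerivAt (G k) (G (k + 1) (v w)) (v w) := by
        have := ((hGd k) (v w)).hasDerivAt
        rwa [hG k] at this
      exact ((hB k).hasDerivAt.mul (h3.comp w hvw.hasDerivAt)).deriv
    simp_rw [hder]
    rw [Finset.sum_add_distrib]
    have h0 : deriv (bellW v i (i + 1)) w = 0 := by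
      rw [bellW_zero v i (i + 1) (by omega)]
      simp
    have hA : ∑ k ∈ range (i + 2), deriv (bellW v i k) w * G k (v w)
        = ∑ k ∈ range (i + 1), deriv (bellW v i k) w * G k (v w) := by
      rw [Finset.sum_range_succ, h0]
      simp
    rw [← hA,
      Finset.sum_range_succ' (fun k => deriv (bellW v i k) w * G k (v w)) (i + 1),
      Finset.sum_range_succ' (fun k => bellW v (i + 1) k w * G k (v w)) (i + 1)]
    have hbs : ∀ k, bellW v (i + 1) (k + 1) w
        = deriv (bellW v i (k + 1)) w + bellW v i k w * deriv v w := fun k => rfl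
    have hb0 : bellW v (i + 1) 0 w = deriv (bellW v i 0) w := rfl
    simp_rw [hbs, hb0]
    have hsplit : ∀ k, (deriv (bellW v i (k + 1)) w + bellW v i k w * deriv v w) * G (k + 1) (v w)
        = deriv (bellW v i (k + 1)) w * G (k + 1) (v w)
          + bellW v i k w * (G (k + 1) (v w) * deriv v w) := by
      intro k; ring
    simp_rw [hsplit]
    rw [Finset.sum_add_distrib]
    ring



/-- The Wronskian of an `(n+1)`-tuple of functions. -/
noncomputable def wronskian (n : ℕ) (f : Fin (n + 1) → ℂ → ℂ) (z : ℂ) : ℂ :=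
  Matrix.det (Matrix.of fun i j : Fin (n + 1) => iteratedDeriv (i : ℕ) (f j) z)

/-- For `v` holomorphic on a domain `U`, the Wronskian of `(1, v/1!, v²/2!, …, vⁿ/n!)`
equals `(v')^(n(n+1)/2)`. -/
theorem wronskian_powers (n : ℕ) (U : Set ℂ) (hU : IsOpen U) (hUc : IsConnected U)
    (v : ℂ → ℂ) (hv : DifferentiableOn ℂ v U) :
    ∀ z ∈ U,
      wronskian n (fun j w => v w ^ (j : ℕ) / ((j : ℕ).factorial : ℂ)) z
        = (deriv v z) ^ (n * (n + 1) / 2) := by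
  intro z hz
  have key : ∀ (i j : ℕ), i ≤ n →
      iteratedDeriv i (fun w => v w ^ j / ((j).factorial : ℂ)) z
        = ∑ k ∈ range (n + 1), bellW v i k z * gpow j k (v z) := by
    intro i j hi
    have h0 : (fun w => v w ^ j / ((j).factorial : ℂ)) = fun w => gpow j 0 (v w) := by
      funext w
      rw [gpow_of_le (Nat.zero_le j)]
      simp
    rw [h0, faa hU hv (gpow j) (gpow_diff j) (gpow_deriv j) i z hz]
    apply Finset.sum_subset
    · intro k hk
      simp only [mem_range] at hk ⊢
      omega
    · intro k _ hk
      simp only [mem_range, not_lt] at hk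
      rw [bellW_zero v i k (by omega)]
      simp
  unfold wronskian
  have hM : (Matrix.of fun i j : Fin (n + 1) =>
        iteratedDeriv (i : ℕ) ((fun j w => v w ^ (j : ℕ) / ((j : ℕ).factorial : ℂ)) j) z)
      = (Matrix.of fun i k : Fin (n + 1) => bellW v (i : ℕ) (k : ℕ) z)
        * (Matrix.of fun k j : Fin (n + 1) => gpow (j : ℕ) (k : ℕ) (v z)) := by
    ext i j
    rw [Matrix.mul_apply]
    simp only [Matrix.of_apply]
    rw [key (i : ℕ) (j : ℕ) (Nat.lt_succ_iff.mp i.isLt),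
      ← Fin.sum_univ_eq_sum_range (fun k => bellW v (i : ℕ) k z * gpow (j : ℕ) k (v z)) (n + 1)]
  rw [hM, Matrix.det_mul]
  have hdetG : (Matrix.of fun k j : Fin (n + 1) => gpow (j : ℕ) (k : ℕ) (v z)).det = 1 := by
    rw [Matrix.det_of_upperTriangular (M := Matrix.of fun k j : Fin (n + 1) =>
        gpow (j : ℕ) (k : ℕ) (v z))]
    · apply Finset.prod_eq_one
      intro j _
      simp only [Matrix.of_apply]
      rw [gpow_of_le le_rfl]
      simp
    · intro k j hkj
      simp only [Matrix.of_apply]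
      rw [gpow_of_gt (by exact_mod_cast hkj)]
  have hdetB : (Matrix.of fun i k : Fin (n + 1) => bellW v (i : ℕ) (k : ℕ) z).det
      = (deriv v z) ^ (n * (n + 1) / 2) := by
    rw [Matrix.det_of_lowerTriangular]
    · have hdiag : ∀ i : Fin (n + 1),
          (Matrix.of fun i k : Fin (n + 1) => bellW v (i : ℕ) (k : ℕ) z) i i
            = (deriv v z) ^ (i : ℕ) := by
        intro i
        simp only [Matrix.of_apply]
        exact bellW_diag v (i : ℕ) z
      rw [Finset.prod_congr rfl (fun i _ => hdiag i), Finset.prod_pow_eq_pow_sum]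
      congr 1
      rw [Fin.sum_univ_eq_sum_range (fun i => i) (n + 1), Finset.sum_range_id]
      simp [Nat.mul_comm]
    · intro i k hik
      simp only [Matrix.of_apply]
      have : (i : ℕ) < (k : ℕ) := by exact_mod_cast hik
      rw [bellW_zero v (i : ℕ) (k : ℕ) this]
  rw [hdetB, hdetG, mul_one]
end

section
/- Let v_0, v_1 : U → ℂ be holomorphic functions on a domain U ⊆ ℂ satisfying v_0(z) v_1'(z) − v_1(z) v_0'(z) ≡ 1 on U. Then the curve f = (√(1/n!) v_0ⁿ, √(1/((n−1)!·1!)) v_0^{n−1} v_1, ..., √(1/(i!(n−i)!)) v_0^{n−i} v_1^{i}, ..., √(1/n!) v_1ⁿ) : U → ℂ^{n+1} has Wronskian identically equal to 1. -/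
open Finset Polynomial

namespace WronskianAux

noncomputable def mono (v₀ v₁ : ℂ → ℂ) (e₁ e₂ e₃ e₄ : ℕ) (z : ℂ) : ℂ :=
  v₀ z ^ e₁ * deriv v₀ z ^ e₂ * v₁ z ^ e₃ * deriv v₁ z ^ e₄

noncomputable def Pf (n : ℕ) (v₀ v₁ : ℂ → ℂ) (j k : ℕ) (z : ℂ) : ℂ :=
  ∑ β ∈ range (k+1),
    ((k.factorial * ((n-j).choose β * j.choose (k-β)) : ℕ) : ℂ) *
      mono v₀ v₁ (n-j-β) β (j-(k-β)) (k-β) z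

theorem mono_hasDerivAt (v₀ v₁ q : ℂ → ℂ) (z : ℂ)
    (h₀ : HasDerivAt v₀ (deriv v₀ z) z) (h₁ : HasDerivAt v₁ (deriv v₁ z) z)
    (hd₀ : HasDerivAt (deriv v₀) (q z * v₀ z) z)
    (hd₁ : HasDerivAt (deriv v₁) (q z * v₁ z) z)
    (e₁ e₂ e₃ e₄ : ℕ) :
    HasDerivAt (mono v₀ v₁ e₁ e₂ e₃ e₄)
      ((e₁ : ℂ) * mono v₀ v₁ (e₁-1) (e₂+1) e₃ e₄ z
        + (e₂ : ℂ) * (q z * mono v₀ v₁ (e₁+1) (e₂-1) e₃ e₄ z)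
        + ((e₃ : ℂ) * mono v₀ v₁ e₁ e₂ (e₃-1) (e₄+1) z
        + (e₄ : ℂ) * (q z * mono v₀ v₁ e₁ e₂ (e₃+1) (e₄-1) z))) z := by
  have H := (((h₀.fun_pow e₁).fun_mul (hd₀.fun_pow e₂)).fun_mul (h₁.fun_pow e₃)).fun_mul (hd₁.fun_pow e₄)
  exact H.congr_deriv (by simp only [mono]; ring)

theorem Pf_hasDerivAt (n : ℕ) (v₀ v₁ q : ℂ → ℂ) (z : ℂ)
    (h₀ : HasDerivAt v₀ (deriv v₀ z) z) (h₁ : HasDerivAt v₁ (deriv v₁ z) z)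
    (hd₀ : HasDerivAt (deriv v₀) (q z * v₀ z) z)
    (hd₁ : HasDerivAt (deriv v₁) (q z * v₁ z) z)
    (j k : ℕ) (hj : j ≤ n) (hk : k ≤ n) :
    HasDerivAt (Pf n v₀ v₁ j k)
      (Pf n v₀ v₁ j (k+1) z + ((k * (n+1-k) : ℕ) : ℂ) * (q z * Pf n v₀ v₁ j (k-1) z)) z := by
  have H : HasDerivAt (Pf n v₀ v₁ j k)
      (∑ β ∈ range (k+1),
        ((k.factorial * ((n-j).choose β * j.choose (k-β)) : ℕ) : ℂ) *
          (((n-j-β : ℕ) : ℂ) * mono v₀ v₁ (n-j-β-1) (β+1) (j-(k-β)) (k-β) z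
            + (β : ℂ) * (q z * mono v₀ v₁ (n-j-β+1) (β-1) (j-(k-β)) (k-β) z)
            + (((j-(k-β) : ℕ) : ℂ) * mono v₀ v₁ (n-j-β) β (j-(k-β)-1) (k-β+1) z
            + ((k-β : ℕ) : ℂ) * (q z * mono v₀ v₁ (n-j-β) β (j-(k-β)+1) (k-β-1) z)))) z := by
    apply HasDerivAt.fun_sum
    intro β _
    exact (mono_hasDerivAt v₀ v₁ q z h₀ h₁ hd₀ hd₁ _ _ _ _).const_mul _
  convert H using 1
  clear H
  set a := n - j with ha
  -- abbreviations
  have key13 : ∑ β ∈ range (k+1),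
      ((((k.factorial * (a.choose β * j.choose (k-β)) : ℕ) : ℂ) * (((a-β : ℕ) : ℂ) *
          mono v₀ v₁ (a-β-1) (β+1) (j-(k-β)) (k-β) z))
        + ((k.factorial * (a.choose β * j.choose (k-β)) : ℕ) : ℂ) * (((j-(k-β) : ℕ) : ℂ) *
          mono v₀ v₁ (a-β) β (j-(k-β)-1) (k-β+1) z))
      = Pf n v₀ v₁ j (k+1) z := by
    have expand : Pf n v₀ v₁ j (k+1) z
        = ∑ β ∈ range (k+2),
            (((β * (k.factorial * (a.choose β * j.choose (k+1-β))) : ℕ) : ℂ) *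
              mono v₀ v₁ (a-β) β (j-(k+1-β)) (k+1-β) z
            + ((((k+1-β) * (k.factorial * (a.choose β * j.choose (k+1-β))) : ℕ) : ℂ) *
              mono v₀ v₁ (a-β) β (j-(k+1-β)) (k+1-β) z)) := by
      rw [Pf]
      apply Finset.sum_congr rfl
      intro β hβ
      rw [Finset.mem_range] at hβ
      have hb : β + (k+1-β) = k+1 := by omega
      have h1 : (k+1).factorial = (β + (k+1-β)) * k.factorial := by
        rw [hb, Nat.factorial_succ]
      rw [h1]; push_cast; ring
    rw [expand, Finset.sum_add_distrib, Finset.sum_add_distrib]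
    congr 1
    · -- T1-part
      have A : ∑ β ∈ range (k+2),
          ((β * (k.factorial * (a.choose β * j.choose (k+1-β))) : ℕ) : ℂ) *
            mono v₀ v₁ (a-β) β (j-(k+1-β)) (k+1-β) z
          = ∑ β ∈ range (k+1),
          (((β+1) * (k.factorial * (a.choose (β+1) * j.choose (k+1-(β+1)))) : ℕ) : ℂ) *
            mono v₀ v₁ (a-(β+1)) (β+1) (j-(k+1-(β+1))) (k+1-(β+1)) z := by
        rw [Finset.sum_range_succ'
          (fun β => ((β * (k.factorial * (a.choose β * j.choose (k+1-β))) : ℕ) : ℂ) *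
            mono v₀ v₁ (a-β) β (j-(k+1-β)) (k+1-β) z) (k+1)]
        simp
      rw [A]
      apply Finset.sum_congr rfl
      intro β hβ
      rw [Finset.mem_range] at hβ
      have e1 : k + 1 - (β+1) = k - β := by omega
      have e2 : a - (β+1) = a - β - 1 := by omega
      rw [e1, e2]
      have hc : (β+1) * (k.factorial * (a.choose (β+1) * j.choose (k-β)))
          = (a-β) * (k.factorial * (a.choose β * j.choose (k-β))) := by
        calc (β+1) * (k.factorial * (a.choose (β+1) * j.choose (k-β)))
            = k.factorial * j.choose (k-β) * (a.choose (β+1) * (β+1)) := by ring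
          _ = k.factorial * j.choose (k-β) * (a.choose β * (a-β)) := by
              rw [Nat.choose_succ_right_eq]
          _ = (a-β) * (k.factorial * (a.choose β * j.choose (k-β))) := by ring
      have hc' := congrArg (Nat.cast : ℕ → ℂ) hc
      push_cast at hc' ⊢
      linear_combination (mono v₀ v₁ (a-β-1) (β+1) (j-(k-β)) (k-β) z) * hc'.symm
    · -- T3-part
      have B : ∑ β ∈ range (k+2),
          (((k+1-β) * (k.factorial * (a.choose β * j.choose (k+1-β))) : ℕ) : ℂ) *
            mono v₀ v₁ (a-β) β (j-(k+1-β)) (k+1-β) z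
          = ∑ β ∈ range (k+1),
          (((k+1-β) * (k.factorial * (a.choose β * j.choose (k+1-β))) : ℕ) : ℂ) *
            mono v₀ v₁ (a-β) β (j-(k+1-β)) (k+1-β) z := by
        rw [Finset.sum_range_succ]
        simp
      rw [B]
      apply Finset.sum_congr rfl
      intro β hβ
      rw [Finset.mem_range] at hβ
      have e1 : k + 1 - β = (k - β) + 1 := by omega
      have e2 : j - ((k-β)+1) = j - (k-β) - 1 := by omega
      rw [e1, e2]
      have hc : ((k-β)+1) * (k.factorial * (a.choose β * j.choose ((k-β)+1)))
          = (j-(k-β)) * (k.factorial * (a.choose β * j.choose (k-β))) := by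
        calc ((k-β)+1) * (k.factorial * (a.choose β * j.choose ((k-β)+1)))
            = k.factorial * a.choose β * (j.choose ((k-β)+1) * ((k-β)+1)) := by ring
          _ = k.factorial * a.choose β * (j.choose (k-β) * (j-(k-β))) := by
              rw [Nat.choose_succ_right_eq]
          _ = (j-(k-β)) * (k.factorial * (a.choose β * j.choose (k-β))) := by ring
      have hc' := congrArg (Nat.cast : ℕ → ℂ) hc
      push_cast at hc' ⊢
      linear_combination (mono v₀ v₁ (a-β) β (j-(k-β)-1) (k-β+1) z) * hc'.symm
  have key24 : ∑ β ∈ range (k+1),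
      (((k.factorial * (a.choose β * j.choose (k-β)) : ℕ) : ℂ) * ((β : ℂ) *
          (q z * mono v₀ v₁ (a-β+1) (β-1) (j-(k-β)) (k-β) z))
        + ((k.factorial * (a.choose β * j.choose (k-β)) : ℕ) : ℂ) * (((k-β : ℕ) : ℂ) *
          (q z * mono v₀ v₁ (a-β) β (j-(k-β)+1) (k-β-1) z)))
      = ((k * (n+1-k) : ℕ) : ℂ) * (q z * Pf n v₀ v₁ j (k-1) z) := by
    rcases k with _ | k'
    · simp
    · -- k = k' + 1
      rw [Finset.sum_add_distrib]
      have A : ∑ β ∈ range (k'+2),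
          ((k'.factorial * (k'+1) * (a.choose β * j.choose (k'+1-β)) : ℕ) : ℂ) * ((β : ℂ) *
            (q z * mono v₀ v₁ (a-β+1) (β-1) (j-(k'+1-β)) (k'+1-β) z))
          = ∑ γ ∈ range (k'+1),
          ((k'.factorial * (k'+1) * (a.choose (γ+1) * j.choose (k'+1-(γ+1))) : ℕ) : ℂ) * (((γ+1 : ℕ) : ℂ) *
            (q z * mono v₀ v₁ (a-(γ+1)+1) ((γ+1)-1) (j-(k'+1-(γ+1))) (k'+1-(γ+1)) z)) := by
        rw [Finset.sum_range_succ'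
          (fun β => ((k'.factorial * (k'+1) * (a.choose β * j.choose (k'+1-β)) : ℕ) : ℂ) * ((β : ℂ) *
            (q z * mono v₀ v₁ (a-β+1) (β-1) (j-(k'+1-β)) (k'+1-β) z))) (k'+1)]
        simp
      have B : ∑ β ∈ range (k'+2),
          ((k'.factorial * (k'+1) * (a.choose β * j.choose (k'+1-β)) : ℕ) : ℂ) * (((k'+1-β : ℕ) : ℂ) *
            (q z * mono v₀ v₁ (a-β) β (j-(k'+1-β)+1) (k'+1-β-1) z))
          = ∑ γ ∈ range (k'+1),
          ((k'.factorial * (k'+1) * (a.choose γ * j.choose (k'+1-γ)) : ℕ) : ℂ) * (((k'+1-γ : ℕ) : ℂ) *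
            (q z * mono v₀ v₁ (a-γ) γ (j-(k'+1-γ)+1) (k'+1-γ-1) z)) := by
        rw [Finset.sum_range_succ]
        simp
      have hfac : (k'+1).factorial = k'.factorial * (k'+1) := by
        rw [Nat.factorial_succ]; ring
      simp only [hfac]
      rw [A, B, ← Finset.sum_add_distrib]
      have RHSexp : (((k'+1) * (n+1-(k'+1)) : ℕ) : ℂ) * (q z * Pf n v₀ v₁ j ((k'+1)-1) z)
          = ∑ γ ∈ range (k'+1),
            ((((k'+1) * (n-k')) * (k'.factorial * (a.choose γ * j.choose (k'-γ))) : ℕ) : ℂ) *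
              (q z * mono v₀ v₁ (a-γ) γ (j-(k'-γ)) (k'-γ) z) := by
        have e0 : (k'+1) - 1 = k' := rfl
        have e1 : n + 1 - (k'+1) = n - k' := by omega
        rw [e0, e1, Pf, Finset.mul_sum, Finset.mul_sum]
        apply Finset.sum_congr rfl
        intro γ _
        push_cast
        ring
      rw [RHSexp]
      apply Finset.sum_congr rfl
      intro γ hγ
      rw [Finset.mem_range] at hγ
      -- three claims
      have eA : k' + 1 - (γ+1) = k' - γ := by omega
      have eB : (γ+1) - 1 = γ := rfl
      rw [eA, eB]
      have claim1 : ((k'.factorial * (k'+1) * (a.choose (γ+1) * j.choose (k'-γ)) : ℕ) : ℂ) * (((γ+1 : ℕ) : ℂ) *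
            (q z * mono v₀ v₁ (a-(γ+1)+1) γ (j-(k'-γ)) (k'-γ) z))
          = (((a-γ) * (k'.factorial * (k'+1) * (a.choose γ * j.choose (k'-γ))) : ℕ) : ℂ) *
            (q z * mono v₀ v₁ (a-γ) γ (j-(k'-γ)) (k'-γ) z) := by
        by_cases hcase : γ < a
        · have e : a - (γ+1) + 1 = a - γ := by omega
          rw [e]
          have hc : (γ+1) * (k'.factorial * (k'+1) * (a.choose (γ+1) * j.choose (k'-γ)))
              = (a-γ) * (k'.factorial * (k'+1) * (a.choose γ * j.choose (k'-γ))) := by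
            calc (γ+1) * (k'.factorial * (k'+1) * (a.choose (γ+1) * j.choose (k'-γ)))
                = k'.factorial * (k'+1) * j.choose (k'-γ) * (a.choose (γ+1) * (γ+1)) := by ring
              _ = k'.factorial * (k'+1) * j.choose (k'-γ) * (a.choose γ * (a-γ)) := by
                  rw [Nat.choose_succ_right_eq]
              _ = (a-γ) * (k'.factorial * (k'+1) * (a.choose γ * j.choose (k'-γ))) := by ring
          have hc' := congrArg (Nat.cast : ℕ → ℂ) hc
          push_cast at hc' ⊢
          linear_combination (q z * mono v₀ v₁ (a-γ) γ (j-(k'-γ)) (k'-γ) z) * hc'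
        · have h0 : a.choose (γ+1) = 0 := Nat.choose_eq_zero_of_lt (by omega)
          have h1 : a - γ = 0 := by omega
          rw [h0, h1]
          simp
      have claim2 : ((k'.factorial * (k'+1) * (a.choose γ * j.choose (k'+1-γ)) : ℕ) : ℂ) * (((k'+1-γ : ℕ) : ℂ) *
            (q z * mono v₀ v₁ (a-γ) γ (j-(k'+1-γ)+1) (k'+1-γ-1) z))
          = (((j-(k'-γ)) * (k'.factorial * (k'+1) * (a.choose γ * j.choose (k'-γ))) : ℕ) : ℂ) *
            (q z * mono v₀ v₁ (a-γ) γ (j-(k'-γ)) (k'-γ) z) := by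
        have eC : k' + 1 - γ = (k'-γ) + 1 := by omega
        have eD : k' + 1 - γ - 1 = k' - γ := by omega
        rw [eC] at *
        have eD' : (k'-γ) + 1 - 1 = k' - γ := rfl
        rw [eD']
        by_cases hcase : (k'-γ) + 1 ≤ j
        · have e : j - ((k'-γ)+1) + 1 = j - (k'-γ) := by omega
          rw [e]
          have hc : ((k'-γ)+1) * (k'.factorial * (k'+1) * (a.choose γ * j.choose ((k'-γ)+1)))
              = (j-(k'-γ)) * (k'.factorial * (k'+1) * (a.choose γ * j.choose (k'-γ))) := by
            calc ((k'-γ)+1) * (k'.factorial * (k'+1) * (a.choose γ * j.choose ((k'-γ)+1)))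
                = k'.factorial * (k'+1) * a.choose γ * (j.choose ((k'-γ)+1) * ((k'-γ)+1)) := by ring
              _ = k'.factorial * (k'+1) * a.choose γ * (j.choose (k'-γ) * (j-(k'-γ))) := by
                  rw [Nat.choose_succ_right_eq]
              _ = (j-(k'-γ)) * (k'.factorial * (k'+1) * (a.choose γ * j.choose (k'-γ))) := by ring
          have hc' := congrArg (Nat.cast : ℕ → ℂ) hc
          push_cast at hc' ⊢
          linear_combination (q z * mono v₀ v₁ (a-γ) γ (j-(k'-γ)) (k'-γ) z) * hc'
        · have h0 : j.choose ((k'-γ)+1) = 0 := Nat.choose_eq_zero_of_lt (by omega)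
          have h1 : j - (k'-γ) = 0 := by omega
          rw [h0, h1]
          simp
      rw [claim1, claim2, ← add_mul, ← Nat.cast_add]
      have claim4 : (a-γ) * (k'.factorial * (k'+1) * (a.choose γ * j.choose (k'-γ)))
            + (j-(k'-γ)) * (k'.factorial * (k'+1) * (a.choose γ * j.choose (k'-γ)))
          = ((k'+1) * (n-k')) * (k'.factorial * (a.choose γ * j.choose (k'-γ))) := by
        by_cases h1 : a < γ
        · rw [Nat.choose_eq_zero_of_lt h1]; ring_nf
        · by_cases h2 : j < k'-γ
          · rw [Nat.choose_eq_zero_of_lt h2]; ring_nf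
          · have e : (a-γ) + (j-(k'-γ)) = n - k' := by omega
            calc (a-γ) * (k'.factorial * (k'+1) * (a.choose γ * j.choose (k'-γ)))
                  + (j-(k'-γ)) * (k'.factorial * (k'+1) * (a.choose γ * j.choose (k'-γ)))
                = ((a-γ) + (j-(k'-γ))) * (k'.factorial * (k'+1) * (a.choose γ * j.choose (k'-γ))) := by
                  ring
              _ = ((k'+1) * (n-k')) * (k'.factorial * (a.choose γ * j.choose (k'-γ))) := by
                  rw [e]; ring
      rw [claim4]
  rw [← key13, ← key24, ← Finset.sum_add_distrib]
  apply Finset.sum_congr rfl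
  intro β _
  ring

theorem rows (n : ℕ) (v₀ v₁ q : ℂ → ℂ) (V : Set ℂ) (hV : IsOpen V)
    (hAq : AnalyticOnNhd ℂ q V)
    (h₀ : ∀ z ∈ V, HasDerivAt v₀ (deriv v₀ z) z)
    (h₁ : ∀ z ∈ V, HasDerivAt v₁ (deriv v₁ z) z)
    (hd₀ : ∀ z ∈ V, HasDerivAt (deriv v₀) (q z * v₀ z) z)
    (hd₁ : ∀ z ∈ V, HasDerivAt (deriv v₁) (q z * v₁ z) z) :
    ∀ i, i ≤ n → ∃ L : ℕ → ℂ → ℂ,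
      L i = (fun _ => 1) ∧ (∀ k, i < k → L k = fun _ => 0) ∧
      (∀ k, AnalyticOnNhd ℂ (L k) V) ∧
      ∀ j, j ≤ n → ∀ (cc : ℂ), ∀ z ∈ V,
        iteratedDeriv i (fun w => cc * v₀ w ^ (n-j) * v₁ w ^ j) z
          = ∑ k ∈ range (i+1), L k z * (cc * Pf n v₀ v₁ j k z) := by
  intro i
  induction i with
  | zero =>
    intro _
    refine ⟨fun k => if k = 0 then (fun _ => 1) else (fun _ => 0), rfl, ?_, ?_, ?_⟩
    · intro k hk
      have : k ≠ 0 := by omega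
      simp [this]
    · intro k
      by_cases hk : k = 0 <;> simp [hk] <;> exact analyticOnNhd_const
    · intro j hj cc z hz
      simp [Pf, mono, iteratedDeriv_zero]
      ring
  | succ i IH =>
    intro hsucc
    obtain ⟨L, hLi, hgt, hA, heq⟩ := IH (by omega)
    refine ⟨fun m w => deriv (L m) w
        + ((if m = 0 then 0 else L (m-1) w)
        + (((m+1) * (n-m) : ℕ) : ℂ) * (q w * L (m+1) w)), ?_, ?_, ?_, ?_⟩
    · funext w
      have e1 : L (i+1) = fun _ => 0 := hgt _ (by omega)
      have e2 : L (i+1+1) = fun _ => 0 := hgt _ (by omega)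
      simp [e1, e2, hLi]
    · intro k hk
      funext w
      have e1 : L k = fun _ => 0 := hgt _ (by omega)
      have e2 : L (k-1) = fun _ => 0 := hgt _ (by omega)
      have e3 : L (k+1) = fun _ => 0 := hgt _ (by omega)
      have hk0 : k ≠ 0 := by omega
      simp [e1, e2, e3, hk0]
    · intro m
      apply ((hA m).deriv).add
      apply AnalyticOnNhd.add
      · by_cases hm : m = 0
        · simp only [hm, if_true]
          exact analyticOnNhd_const
        · simp only [hm, if_false]
          exact hA (m-1)
      · exact analyticOnNhd_const.mul (hAq.mul (hA (m+1)))
    · intro j hj cc z hz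
      rw [iteratedDeriv_succ]
      have hev : iteratedDeriv i (fun w => cc * v₀ w ^ (n-j) * v₁ w ^ j)
          =ᶠ[nhds z] (fun w => ∑ k ∈ range (i+1), L k w * (cc * Pf n v₀ v₁ j k w)) := by
        filter_upwards [hV.mem_nhds hz] with w hw using heq j hj cc w hw
      rw [hev.deriv_eq]
      have HD : HasDerivAt (fun w => ∑ k ∈ range (i+1), L k w * (cc * Pf n v₀ v₁ j k w))
          (∑ k ∈ range (i+1),
            (deriv (L k) z * (cc * Pf n v₀ v₁ j k z)
              + L k z * (cc * (Pf n v₀ v₁ j (k+1) z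
                  + ((k * (n+1-k) : ℕ) : ℂ) * (q z * Pf n v₀ v₁ j (k-1) z))))) z := by
        apply HasDerivAt.fun_sum
        intro k hk
        rw [Finset.mem_range] at hk
        exact ((hA k z hz).differentiableAt.hasDerivAt).mul
          ((Pf_hasDerivAt n v₀ v₁ q z (h₀ z hz) (h₁ z hz) (hd₀ z hz) (hd₁ z hz) j k hj
            (by omega)).const_mul cc)
      rw [HD.deriv]
      -- now pure algebra of sums
      have hsplit : ∀ k ∈ range (i+1),
          deriv (L k) z * (cc * Pf n v₀ v₁ j k z)
            + L k z * (cc * (Pf n v₀ v₁ j (k+1) z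
                + ((k * (n+1-k) : ℕ) : ℂ) * (q z * Pf n v₀ v₁ j (k-1) z)))
          = deriv (L k) z * (cc * Pf n v₀ v₁ j k z)
            + (L k z * (cc * Pf n v₀ v₁ j (k+1) z)
            + ((k * (n+1-k) : ℕ) : ℂ) * (q z * L k z) * (cc * Pf n v₀ v₁ j (k-1) z)) := by
        intro k _; push_cast; ring
      rw [Finset.sum_congr rfl hsplit, Finset.sum_add_distrib, Finset.sum_add_distrib]
      have hR : ∀ m ∈ range (i+1+1),
          (fun m w => deriv (L m) w
            + ((if m = 0 then 0 else L (m-1) w)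
            + (((m+1) * (n-m) : ℕ) : ℂ) * (q w * L (m+1) w))) m z * (cc * Pf n v₀ v₁ j m z)
          = deriv (L m) z * (cc * Pf n v₀ v₁ j m z)
            + ((if m = 0 then 0 else L (m-1) z) * (cc * Pf n v₀ v₁ j m z)
            + (((m+1) * (n-m) : ℕ) : ℂ) * (q z * L (m+1) z) * (cc * Pf n v₀ v₁ j m z)) := by
        intro m _
        simp only []
        ring
      rw [Finset.sum_congr rfl hR, Finset.sum_add_distrib, Finset.sum_add_distrib]
      congr 1
      · -- A-part
        rw [Finset.sum_range_succ (fun m => deriv (L m) z * (cc * Pf n v₀ v₁ j m z)) (i+1)]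
        have e1 : L (i+1) = fun _ => 0 := hgt _ (by omega)
        simp [e1]
      congr 1
      · -- B-part
        rw [Finset.sum_range_succ'
          (fun m => (if m = 0 then 0 else L (m-1) z) * (cc * Pf n v₀ v₁ j m z)) (i+1)]
        simp
      · -- C-part
        rw [Finset.sum_range_succ'
          (fun k => ((k * (n+1-k) : ℕ) : ℂ) * (q z * L k z) * (cc * Pf n v₀ v₁ j (k-1) z)) i]
        rw [Finset.sum_range_succ
          (fun m => (((m+1) * (n-m) : ℕ) : ℂ) * (q z * L (m+1) z) * (cc * Pf n v₀ v₁ j m z)) (i+1)]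
        rw [Finset.sum_range_succ
          (fun m => (((m+1) * (n-m) : ℕ) : ℂ) * (q z * L (m+1) z) * (cc * Pf n v₀ v₁ j m z)) i]
        have e1 : L (i+1) = fun _ => 0 := hgt _ (by omega)
        have e2 : L (i+1+1) = fun _ => 0 := hgt _ (by omega)
        have e3 : ∀ γ : ℕ, n + 1 - (γ+1) = n - γ := fun _ => by omega
        simp only [e1, e2, e3, Nat.add_sub_cancel, mul_zero, zero_mul, add_zero, Nat.cast_zero]

theorem coeff_linpow (a b : ℂ) (m β : ℕ) :
    ((C a + C b * X)^m).coeff β = (m.choose β : ℂ) * a^(m-β) * b^β := by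
  by_cases hβ : β ≤ m
  · rw [add_pow, finset_sum_coeff]
    rw [Finset.sum_eq_single (m-β)]
    · have h1 : m - (m-β) = β := by omega
      rw [h1]
      rw [show C a ^ (m-β) * (C b * X) ^ β * ((m.choose (m-β) : ℕ) : ℂ[X])
          = C (a^(m-β) * b^β * ((m.choose (m-β) : ℕ) : ℂ)) * X^β from by
        simp only [← C_eq_natCast, C_mul, C_pow, mul_pow]; ring]
      rw [coeff_C_mul, coeff_X_pow, if_pos rfl, mul_one, Nat.choose_symm hβ]
      ring
    · intro l hl hne
      rw [Finset.mem_range] at hl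
      have : (C a)^l * (C b * X)^(m-l) * ((m.choose l : ℕ) : ℂ[X])
          = C (a^l * b^(m-l) * (m.choose l : ℂ)) * X^(m-l) := by
        simp only [← C_eq_natCast, C_mul, C_pow, mul_pow]; ring
      rw [this, coeff_C_mul, coeff_X_pow, if_neg (by omega), mul_zero]
    · intro h
      exact absurd (Finset.mem_range.mpr (by omega)) h
  · have h1 : m.choose β = 0 := Nat.choose_eq_zero_of_lt (by omega)
    rw [h1]
    simp only [Nat.cast_zero, zero_mul]
    apply coeff_eq_zero_of_natDegree_lt
    have h2 : ((C a + C b * X)^m).natDegree ≤ m * 1 := by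
      apply (natDegree_pow_le).trans
      apply Nat.mul_le_mul_left
      apply (natDegree_add_le _ _).trans
      simp only [natDegree_C, max_le_iff]
      exact ⟨Nat.zero_le 1, (natDegree_C_mul_le _ _).trans (by simp)⟩
    omega

theorem detQ (n : ℕ) (a b c d : ℂ) (ha : a ≠ 0) (h : a * d - c * b = 1) :
    (Matrix.of fun k j : Fin (n+1) =>
      (((C a + C b * X)^(n-(j:ℕ)) * (C c + C d * X)^(j:ℕ)).coeff k)).det = 1 := by
  have hB : C c + C d * X = C (c * a⁻¹) * (C a + C b * X) + C a⁻¹ * X := by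
    have h1 : c * a⁻¹ * a = c := by field_simp
    have h2 : c * a⁻¹ * b + a⁻¹ = d := by
      field_simp
      linear_combination -h
    calc C c + C d * X = C (c*a⁻¹*a) + C (c*a⁻¹*b + a⁻¹) * X := by rw [h1, h2]
      _ = C (c * a⁻¹) * (C a + C b * X) + C a⁻¹ * X := by
          simp only [C_mul, C_add]; ring
  have key : ∀ j : ℕ, j ≤ n →
      (C a + C b * X)^(n-j) * (C c + C d * X)^j
        = ∑ m ∈ range (j+1),
          C ((j.choose m : ℂ) * (c*a⁻¹)^(j-m) * a⁻¹^m) * ((C a + C b * X)^(n-m) * X^m) := by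
    intro j hj
    rw [hB, add_pow (C (c*a⁻¹) * (C a + C b * X)) (C a⁻¹ * X) j, Finset.mul_sum]
    rw [← Finset.sum_range_reflect
      (fun m => C ((j.choose m : ℂ) * (c*a⁻¹)^(j-m) * a⁻¹^m) * ((C a + C b * X)^(n-m) * X^m)) (j+1)]
    apply Finset.sum_congr rfl
    intro l hl
    rw [Finset.mem_range] at hl
    have e0 : j + 1 - 1 - l = j - l := by omega
    have e1 : j - (j - l) = l := by omega
    have e2 : n - j + l = n - (j - l) := by omega
    have e3 : j.choose (j-l) = j.choose l := Nat.choose_symm (by omega)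
    rw [e0, e1, e3]
    rw [show (C a + C b * X)^(n-j) * ((C (c*a⁻¹) * (C a + C b * X))^l * (C a⁻¹ * X)^(j-l)
          * ((j.choose l : ℕ) : ℂ[X]))
        = C ((j.choose l : ℂ) * (c*a⁻¹)^l * a⁻¹^(j-l)) * ((C a + C b * X)^(n-j+l) * X^(j-l)) from by
      simp only [← C_eq_natCast, C_mul, C_pow, mul_pow, pow_add]; ring]
    rw [e2]
  -- the triangular factors
  set Qt : Matrix (Fin (n+1)) (Fin (n+1)) ℂ := Matrix.of fun k m =>
    if (m:ℕ) ≤ (k:ℕ) then ((n-(m:ℕ)).choose ((k:ℕ)-(m:ℕ)) : ℂ) * a^(n-(k:ℕ)) * b^((k:ℕ)-(m:ℕ)) else 0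
    with hQt
  set Vm : Matrix (Fin (n+1)) (Fin (n+1)) ℂ := Matrix.of fun m j =>
    if (m:ℕ) ≤ (j:ℕ) then ((j:ℕ).choose (m:ℕ) : ℂ) * (c*a⁻¹)^((j:ℕ)-(m:ℕ)) * a⁻¹^(m:ℕ) else 0
    with hVm
  have hfact : (Matrix.of fun k j : Fin (n+1) =>
      (((C a + C b * X)^(n-(j:ℕ)) * (C c + C d * X)^(j:ℕ)).coeff k)) = Qt * Vm := by
    ext k j
    have hterm : ∀ m ∈ range ((j:ℕ)+1),
        (C ((((j:ℕ)).choose m : ℂ) * (c*a⁻¹)^((j:ℕ)-m) * a⁻¹^m) * ((C a + C b * X)^(n-m) * X^m)).coeff (k:ℕ)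
        = (((j:ℕ)).choose m : ℂ) * (c*a⁻¹)^((j:ℕ)-m) * a⁻¹^m
            * (if m ≤ (k:ℕ) then ((n-m).choose ((k:ℕ)-m) : ℂ) * a^(n-(k:ℕ)) * b^((k:ℕ)-m) else 0) := by
      intro m hm
      rw [Finset.mem_range] at hm
      rw [coeff_C_mul, coeff_mul_X_pow', coeff_linpow]
      by_cases hmk : m ≤ (k:ℕ)
      · rw [if_pos hmk, if_pos hmk]
        have e : n - m - ((k:ℕ) - m) = n - (k:ℕ) := by
          have := k.isLt
          omega
        rw [e]
      · rw [if_neg hmk, if_neg hmk]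
    rw [Matrix.mul_apply, Matrix.of_apply, key (j:ℕ) (by omega), finset_sum_coeff]
    rw [Finset.sum_congr rfl hterm]
    have hf : ∀ m : Fin (n+1), Qt k m * Vm m j
        = (fun m' => (if m' ≤ (j:ℕ) then ((j:ℕ).choose m' : ℂ) * (c*a⁻¹)^((j:ℕ)-m') * a⁻¹^m' else 0)
          * (if m' ≤ (k:ℕ) then ((n-m').choose ((k:ℕ)-m') : ℂ) * a^(n-(k:ℕ)) * b^((k:ℕ)-m') else 0)) (m:ℕ) := by
      intro m
      rw [hQt, hVm]
      simp only [Matrix.of_apply]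
      ring
    rw [Finset.sum_congr rfl (fun m _ => hf m)]
    rw [Fin.sum_univ_eq_sum_range
      (fun m' => (if m' ≤ (j:ℕ) then ((j:ℕ).choose m' : ℂ) * (c*a⁻¹)^((j:ℕ)-m') * a⁻¹^m' else 0)
        * (if m' ≤ (k:ℕ) then ((n-m').choose ((k:ℕ)-m') : ℂ) * a^(n-(k:ℕ)) * b^((k:ℕ)-m') else 0)) (n+1)]
    rw [Finset.sum_subset (Finset.range_subset_range.mpr (by omega : (j:ℕ)+1 ≤ n+1))
      (by
        intro m hm hnm
        rw [Finset.mem_range] at hm hnm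
        push_neg at hnm
        have : ((j:ℕ).choose m : ℂ) = 0 := by
          rw [Nat.choose_eq_zero_of_lt (by omega)]
          simp
        rw [this]
        simp)]
    apply Finset.sum_congr rfl
    intro m hm
    rw [Finset.mem_range] at hm
    by_cases hmj : m ≤ (j:ℕ)
    · rw [if_pos hmj]
    · rw [if_neg hmj, Nat.choose_eq_zero_of_lt (by omega)]
      simp
  rw [hfact, Matrix.det_mul]
  have hdQt : Qt.det = ∏ i : Fin (n+1), a^(n-(i:ℕ)) := by
    rw [Matrix.det_of_lowerTriangular Qt (by
      intro i j hij
      rw [hQt]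
      simp only [Matrix.of_apply]
      rw [if_neg]
      simp only [OrderDual.toDual_lt_toDual] at hij
      omega)]
    apply Finset.prod_congr rfl
    intro i _
    rw [hQt]
    simp [Nat.sub_self]
  have hdVm : Vm.det = ∏ i : Fin (n+1), a⁻¹^(i:ℕ) := by
    rw [Matrix.det_of_upperTriangular (by
      intro i j hij
      rw [hVm]
      simp only [Matrix.of_apply]
      rw [if_neg]
      simp only [id] at hij
      omega)]
    apply Finset.prod_congr rfl
    intro i _
    rw [hVm]
    simp [Nat.sub_self]
  rw [hdQt, hdVm]
  rw [Fin.prod_univ_eq_prod_range (fun i => a^(n-i)) (n+1),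
    Fin.prod_univ_eq_prod_range (fun i => a⁻¹^i) (n+1),
    Finset.prod_pow_eq_pow_sum, Finset.prod_pow_eq_pow_sum]
  have hs : ∑ i ∈ range (n+1), (n-i) = ∑ i ∈ range (n+1), i := by
    have h := Finset.sum_range_reflect (fun i => i) (n+1)
    simp only [Nat.add_sub_cancel] at h
    exact h
  rw [hs, ← mul_pow, mul_inv_cancel₀ ha, one_pow]


theorem Pf_eq_coeff (n : ℕ) (v₀ v₁ : ℂ → ℂ) (j k : ℕ) (z : ℂ) :
    Pf n v₀ v₁ j k z = (k.factorial : ℂ) *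
      (((C (v₀ z) + C (deriv v₀ z) * X)^(n-j) * (C (v₁ z) + C (deriv v₁ z) * X)^j).coeff k) := by
  rw [coeff_mul, Finset.Nat.sum_antidiagonal_eq_sum_range_succ_mk, Finset.mul_sum, Pf]
  apply Finset.sum_congr rfl
  intro β _
  rw [coeff_linpow, coeff_linpow, mono]
  push_cast
  ring

theorem iter_analytic {g : ℂ → ℂ} {s : Set ℂ} (h : AnalyticOnNhd ℂ g s) (m : ℕ) :
    AnalyticOnNhd ℂ (iteratedDeriv m g) s := by
  induction m with
  | zero => rwa [iteratedDeriv_zero]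
  | succ m ih => rw [iteratedDeriv_succ]; exact ih.deriv

theorem main_pt (n : ℕ) (U : Set ℂ) (hU : IsOpen U)
    (v₀ v₁ : ℂ → ℂ) (hv₀ : DifferentiableOn ℂ v₀ U) (hv₁ : DifferentiableOn ℂ v₁ U)
    (hW : ∀ z ∈ U, v₀ z * deriv v₁ z - v₁ z * deriv v₀ z = 1)
    (c : Fin (n+1) → ℂ)
    (hc : (∏ i : Fin (n+1), (((i:ℕ).factorial : ℕ) : ℂ)) * (∏ i : Fin (n+1), c i) = 1)
    (z₀ : ℂ) (hz₀ : z₀ ∈ U) (hv : v₀ z₀ ≠ 0) :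
    (Matrix.of fun i j : Fin (n+1) =>
      iteratedDeriv (i:ℕ) (fun w => c j * v₀ w ^ (n-(j:ℕ)) * v₁ w ^ (j:ℕ)) z₀).det = 1 := by
  have hA₀ := hv₀.analyticOnNhd hU
  have hA₁ := hv₁.analyticOnNhd hU
  set V : Set ℂ := U ∩ v₀ ⁻¹' {0}ᶜ with hVdef
  have hV : IsOpen V := hv₀.continuousOn.isOpen_inter_preimage hU isOpen_compl_singleton
  have hVU : V ⊆ U := Set.inter_subset_left
  have hz₀V : z₀ ∈ V := ⟨hz₀, by simpa using hv⟩
  have hvV : ∀ z ∈ V, v₀ z ≠ 0 := fun z hz => by simpa using hz.2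
  set q : ℂ → ℂ := fun z => deriv (deriv v₀) z / v₀ z with hqdef
  have hAq : AnalyticOnNhd ℂ q V := ((hA₀.deriv.deriv).mono hVU).div (hA₀.mono hVU) hvV
  have h₀V : ∀ z ∈ V, HasDerivAt v₀ (deriv v₀ z) z :=
    fun z hz => (hA₀ z (hVU hz)).differentiableAt.hasDerivAt
  have h₁V : ∀ z ∈ V, HasDerivAt v₁ (deriv v₁ z) z :=
    fun z hz => (hA₁ z (hVU hz)).differentiableAt.hasDerivAt
  have hd₀V : ∀ z ∈ V, HasDerivAt (deriv v₀) (q z * v₀ z) z := by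
    intro z hz
    have h := (hA₀.deriv z (hVU hz)).differentiableAt.hasDerivAt
    have e : q z * v₀ z = deriv (deriv v₀) z := div_mul_cancel₀ _ (hvV z hz)
    rwa [e]
  have hrel : ∀ z ∈ U, v₀ z * deriv (deriv v₁) z = v₁ z * deriv (deriv v₀) z := by
    intro z hz
    have Hd : HasDerivAt (fun w => v₀ w * deriv v₁ w - v₁ w * deriv v₀ w)
        (v₀ z * deriv (deriv v₁) z - v₁ z * deriv (deriv v₀) z) z := by
      have H := (((hA₀ z hz).differentiableAt.hasDerivAt).fun_mul
        ((hA₁.deriv z hz).differentiableAt.hasDerivAt)).fun_sub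
        (((hA₁ z hz).differentiableAt.hasDerivAt).fun_mul
        ((hA₀.deriv z hz).differentiableAt.hasDerivAt))
      exact H.congr_deriv (by ring)
    have hev : (fun w => v₀ w * deriv v₁ w - v₁ w * deriv v₀ w) =ᶠ[nhds z] (fun _ => (1:ℂ)) := by
      filter_upwards [hU.mem_nhds hz] with w hw using hW w hw
    have h0 : v₀ z * deriv (deriv v₁) z - v₁ z * deriv (deriv v₀) z = 0 := by
      rw [← Hd.deriv, hev.deriv_eq, deriv_const]
    linear_combination h0
  have hd₁V : ∀ z ∈ V, HasDerivAt (deriv v₁) (q z * v₁ z) z := by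
    intro z hz
    have h := (hA₁.deriv z (hVU hz)).differentiableAt.hasDerivAt
    have e : q z * v₁ z = deriv (deriv v₁) z := by
      have hr := hrel z (hVU hz)
      have hv0 := hvV z hz
      rw [hqdef]
      field_simp
      linear_combination -hr
    rwa [e]
  choose L hL1 hL2 hL3 hL4 using
    fun i : Fin (n+1) => rows n v₀ v₁ q V hV hAq h₀V h₁V hd₀V hd₁V (i:ℕ) (Nat.lt_succ_iff.mp i.isLt)
  have hM : (Matrix.of fun i j : Fin (n+1) =>
      iteratedDeriv (i:ℕ) (fun w => c j * v₀ w ^ (n-(j:ℕ)) * v₁ w ^ (j:ℕ)) z₀)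
      = (Matrix.of fun i k : Fin (n+1) => L i (k:ℕ) z₀)
        * (Matrix.of fun k j : Fin (n+1) => c j * Pf n v₀ v₁ (j:ℕ) (k:ℕ) z₀) := by
    ext i j
    rw [Matrix.mul_apply, Matrix.of_apply]
    rw [hL4 i (j:ℕ) (Nat.lt_succ_iff.mp j.isLt) (c j) z₀ hz₀V]
    rw [Finset.sum_subset (Finset.range_subset_range.mpr (by omega : (i:ℕ)+1 ≤ n+1)) (by
      intro k hk hnk
      rw [Finset.mem_range] at hk hnk
      push_neg at hnk
      rw [hL2 i k (by omega)]
      simp)]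
    rw [← Fin.sum_univ_eq_sum_range (fun k => L i k z₀ * (c j * Pf n v₀ v₁ (j:ℕ) k z₀)) (n+1)]
    simp only [Matrix.of_apply]
  rw [hM, Matrix.det_mul]
  have hdL : (Matrix.of fun i k : Fin (n+1) => L i (k:ℕ) z₀).det = 1 := by
    rw [Matrix.det_of_lowerTriangular _ (by
      intro i k hik
      simp only [OrderDual.toDual_lt_toDual] at hik
      simp only [Matrix.of_apply]
      rw [hL2 i (k:ℕ) (by exact_mod_cast hik)])]
    have : ∀ i : Fin (n+1), (Matrix.of fun i k : Fin (n+1) => L i (k:ℕ) z₀) i i = 1 := by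
      intro i
      simp only [Matrix.of_apply]
      rw [hL1 i]
    rw [Finset.prod_congr rfl (fun i _ => this i)]
    simp
  have hPm : (Matrix.of fun k j : Fin (n+1) => c j * Pf n v₀ v₁ (j:ℕ) (k:ℕ) z₀)
      = Matrix.diagonal (fun k : Fin (n+1) => (((k:ℕ).factorial : ℕ) : ℂ))
        * (Matrix.of fun k j : Fin (n+1) =>
            (((C (v₀ z₀) + C (deriv v₀ z₀) * X)^(n-(j:ℕ))
              * (C (v₁ z₀) + C (deriv v₁ z₀) * X)^(j:ℕ)).coeff k))
        * Matrix.diagonal c := by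
    ext k j
    rw [Matrix.mul_diagonal, Matrix.diagonal_mul]
    simp only [Matrix.of_apply]
    rw [Pf_eq_coeff]
    ring
  rw [hPm, Matrix.det_mul, Matrix.det_mul, Matrix.det_diagonal, Matrix.det_diagonal,
    detQ n (v₀ z₀) (deriv v₀ z₀) (v₁ z₀) (deriv v₁ z₀) hv (hW z₀ hz₀), hdL]
  rw [mul_one]
  rw [one_mul, hc]

theorem const_prod (n : ℕ) :
    (∏ i : Fin (n+1), (((i:ℕ).factorial : ℕ) : ℂ))
      * (∏ i : Fin (n+1),
        ((Real.sqrt (1 / (((i:ℕ).factorial * (n-(i:ℕ)).factorial : ℕ) : ℝ)) : ℝ) : ℂ)) = 1 := by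
  have key : (∏ i ∈ range (n+1), ((i.factorial : ℝ)
      * Real.sqrt (1 / ((i.factorial * (n-i).factorial : ℕ) : ℝ)))) = 1 := by
    set r := ∏ i ∈ range (n+1), ((i.factorial : ℝ)
      * Real.sqrt (1 / ((i.factorial * (n-i).factorial : ℕ) : ℝ))) with hr
    have hnonneg : 0 ≤ r := by
      apply Finset.prod_nonneg
      intro i _
      positivity
    have hsq : r^2 = 1 := by
      rw [hr, ← Finset.prod_pow]
      have : ∀ i ∈ range (n+1), ((i.factorial : ℝ)
          * Real.sqrt (1 / ((i.factorial * (n-i).factorial : ℕ) : ℝ)))^2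
          = (i.factorial : ℝ) / ((n-i).factorial : ℝ) := by
        intro i _
        rw [mul_pow, Real.sq_sqrt (by positivity)]
        have h1 : ((i.factorial * (n-i).factorial : ℕ) : ℝ)
            = (i.factorial : ℝ) * ((n-i).factorial : ℝ) := by push_cast; ring
        rw [h1]
        have h2 : (i.factorial : ℝ) ≠ 0 := by positivity
        have h3 : ((n-i).factorial : ℝ) ≠ 0 := by positivity
        field_simp
      rw [Finset.prod_congr rfl this, Finset.prod_div_distrib]
      have hrefl : ∏ i ∈ range (n+1), (((n-i).factorial : ℝ))
          = ∏ i ∈ range (n+1), ((i.factorial : ℝ)) := by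
        have h := Finset.prod_range_reflect (fun i => ((i.factorial : ℕ) : ℝ)) (n+1)
        simp only [Nat.add_sub_cancel] at h
        exact h
      rw [hrefl, div_self]
      apply Finset.prod_ne_zero_iff.mpr
      intro i _
      positivity
    nlinarith [hsq, hnonneg]
  have hsplit : (∏ i ∈ range (n+1), ((i.factorial : ℕ) : ℂ))
      * (∏ i ∈ range (n+1),
        ((Real.sqrt (1 / ((i.factorial * (n-i).factorial : ℕ) : ℝ)) : ℝ) : ℂ)) = 1 := by
    rw [← Finset.prod_mul_distrib]
    have : ∀ i ∈ range (n+1), ((i.factorial : ℕ) : ℂ)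
        * ((Real.sqrt (1 / ((i.factorial * (n-i).factorial : ℕ) : ℝ)) : ℝ) : ℂ)
        = (((i.factorial : ℝ) * Real.sqrt (1 / ((i.factorial * (n-i).factorial : ℕ) : ℝ)) : ℝ) : ℂ) := by
      intro i _
      push_cast
      ring
    rw [Finset.prod_congr rfl this, ← Complex.ofReal_prod, key]
    simp
  rw [Fin.prod_univ_eq_prod_range (fun i => ((i.factorial : ℕ) : ℂ)) (n+1),
    Fin.prod_univ_eq_prod_range
      (fun i => ((Real.sqrt (1 / ((i.factorial * (n-i).factorial : ℕ) : ℝ)) : ℝ) : ℂ)) (n+1)]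
  exact hsplit

end WronskianAux

open WronskianAux in
/-- If `v₀, v₁` are holomorphic on a domain `U` with `v₀ v₁' − v₁ v₀' ≡ 1`, then the curve
`(√(1/(i!(n−i)!)) v₀^{n−i} v₁^{i})_{i=0}^{n}` has Wronskian identically `1`. -/
theorem wronskian_canonical_lift (n : ℕ) (U : Set ℂ) (hU : IsOpen U) (hUc : IsConnected U)
    (v₀ v₁ : ℂ → ℂ) (hv₀ : DifferentiableOn ℂ v₀ U) (hv₁ : DifferentiableOn ℂ v₁ U)
    (hW : ∀ z ∈ U, v₀ z * deriv v₁ z - v₁ z * deriv v₀ z = 1) :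
    ∀ z ∈ U,
      wronskian n
        (fun i w =>
          ((Real.sqrt (1 / (((i : ℕ).factorial * (n - (i : ℕ)).factorial : ℕ) : ℝ)) : ℝ) : ℂ)
            * v₀ w ^ (n - (i : ℕ)) * v₁ w ^ (i : ℕ)) z = 1 := by
  classical
  have hA₀ := hv₀.analyticOnNhd hU
  have hA₁ := hv₁.analyticOnNhd hU
  set F : Fin (n+1) → ℂ → ℂ := fun i w =>
    ((Real.sqrt (1 / (((i : ℕ).factorial * (n - (i : ℕ)).factorial : ℕ) : ℝ)) : ℝ) : ℂ)
      * v₀ w ^ (n - (i : ℕ)) * v₁ w ^ (i : ℕ) with hF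
  have hmain : ∀ w ∈ U, v₀ w ≠ 0 → wronskian n F w = 1 := by
    intro w hw hvw
    unfold _root_.wronskian
    exact main_pt n U hU v₀ v₁ hv₀ hv₁ hW
      (fun i => ((Real.sqrt (1 / (((i : ℕ).factorial * (n - (i : ℕ)).factorial : ℕ) : ℝ)) : ℝ) : ℂ))
      (const_prod n) w hw hvw
  intro z hz
  by_cases hv : v₀ z ≠ 0
  · exact hmain z hz hv
  push_neg at hv
  -- the wronskian is continuous on U
  have hAf : ∀ j : Fin (n+1), AnalyticOnNhd ℂ (F j) U :=
    fun j => (analyticOnNhd_const.mul (hA₀.pow _)).mul (hA₁.pow _)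
  have hWc : ContinuousOn (fun w => wronskian n F w) U := by
    have hrw : (fun w => wronskian n F w)
        = fun w => ∑ σ : Equiv.Perm (Fin (n+1)),
            ((Equiv.Perm.sign σ : ℤ) : ℂ) * ∏ i : Fin (n+1), iteratedDeriv ((σ i : Fin (n+1)) : ℕ) (F i) w := by
      funext w
      unfold _root_.wronskian
      rw [Matrix.det_apply']
      rfl
    rw [hrw]
    exact (Finset.analyticOnNhd_fun_sum _ (fun σ _ =>
      analyticOnNhd_const.mul (Finset.analyticOnNhd_fun_prod _ (fun i _ =>
        iter_analytic (hAf i) _)))).continuousOn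
  -- density of the set where v₀ ≠ 0
  have hdv : deriv v₀ z ≠ 0 := by
    intro h0
    have h1 := hW z hz
    rw [hv, h0] at h1
    simp at h1
  set E : Set ℂ := {w | w ∈ U ∧ v₀ w ≠ 0} with hE
  have hclos : z ∈ closure E := by
    rw [mem_closure_iff]
    intro O hO hzO
    by_contra hemp
    rw [Set.not_nonempty_iff_eq_empty] at hemp
    have hev : v₀ =ᶠ[nhds z] (fun _ => (0:ℂ)) := by
      filter_upwards [(hO.inter hU).mem_nhds ⟨hzO, hz⟩] with w hw
      by_contra hne
      have : w ∈ O ∩ E := ⟨hw.1, hw.2, hne⟩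
      rw [hemp] at this
      exact this
    have : deriv v₀ z = 0 := by rw [hev.deriv_eq, deriv_const]
    exact hdv this
  haveI hne : (nhdsWithin z E).NeBot := mem_closure_iff_nhdsWithin_neBot.mp hclos
  have t1 : Filter.Tendsto (fun w => wronskian n F w) (nhdsWithin z E)
      (nhds (wronskian n F z)) :=
    (hWc z hz).mono_left (nhdsWithin_mono z (fun w hw => hw.1))
  have t2 : Filter.Tendsto (fun w => wronskian n F w) (nhdsWithin z E) (nhds 1) := by
    apply Filter.Tendsto.congr' _ tendsto_const_nhds
    filter_upwards [self_mem_nhdsWithin] with w hw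
    exact (hmain w hw.1 hw.2).symm
  exact tendsto_nhds_unique t1 t2
end

section
/- Let M = (m_{i,j})_{0≤i,j≤n} be a positive definite Hermitian matrix and let k be a positive integer. Let δ = (a_{i,j}) be its Cholesky factor (upper triangular with positive diagonal entries, M = δ*δ). Then a_{i,j} = 0 whenever k ∤ (i − j) if and only if m_{i,j} = 0 whenever k ∤ (i − j). -/
open scoped ComplexOrder

/-- Let `M` be positive definite Hermitian with Cholesky factor `δ` (upper triangular with
positive diagonal, `M = δ.conjTransposeδ`), and let `k > 0`. Then `δ_{ij} = 0` whenever `k ∤ (i−j)` iff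
`M_{ij} = 0` whenever `k ∤ (i−j)`. -/
theorem cholesky_sparsity (n k : ℕ) (hk : 0 < k)
    (M δ : Matrix (Fin (n + 1)) (Fin (n + 1)) ℂ)
    (hM : M.PosDef)
    (hupper : ∀ i j, j < i → δ i j = 0)
    (hdiag : ∀ i, 0 < (δ i i).re ∧ (δ i i).im = 0)
    (hfac : M = δ.conjTranspose * δ) :
    (∀ i j : Fin (n + 1), ¬ ((k : ℤ) ∣ ((i : ℤ) - (j : ℤ))) → δ i j = 0) ↔
      (∀ i j : Fin (n + 1), ¬ ((k : ℤ) ∣ ((i : ℤ) - (j : ℤ))) → M i j = 0) := by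
  have key3 : ∀ s i j : Fin (n + 1), ¬ ((k : ℤ) ∣ ((i : ℤ) - (j : ℤ))) →
      ((k : ℤ) ∣ ((s : ℤ) - (i : ℤ))) → ¬ ((k : ℤ) ∣ ((s : ℤ) - (j : ℤ))) := by
    intro s i j hij hsi hsj
    exact hij (by simpa [sub_sub_sub_cancel_left] using dvd_sub hsj hsi)
  constructor
  · intro h i j hij
    rw [hfac, Matrix.mul_apply]
    apply Finset.sum_eq_zero
    intro s _
    by_cases hs : (k : ℤ) ∣ ((s : ℤ) - (i : ℤ))
    · simp [Matrix.conjTranspose_apply, h s j (key3 s i j hij hs)]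
    · simp [Matrix.conjTranspose_apply, h s i hs]
  · intro h
    have key : ∀ N : ℕ, ∀ i j : Fin (n + 1), (i : ℕ) = N →
        ¬ ((k : ℤ) ∣ ((i : ℤ) - (j : ℤ))) → δ i j = 0 := by
      intro N
      induction N using Nat.strong_induction_on with
      | _ N IH =>
        intro i j hiN hij
        rcases lt_trichotomy j i with hji | hji | hji
        · exact hupper i j hji
        · exact absurd (hji ▸ (by simp : (k : ℤ) ∣ ((i : ℤ) - (i : ℤ)))) hij
        · -- i < j
          have hMij : M i j = 0 := h i j hij
          rw [hfac, Matrix.mul_apply] at hMij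
          have hsum : ∑ s, (δ.conjTranspose) i s * δ s j
              = (δ.conjTranspose) i i * δ i j := by
            apply Finset.sum_eq_single
            · intro s _ hs
              rcases lt_or_gt_of_ne hs with hsi | hsi
              · -- s < i
                by_cases hd : (k : ℤ) ∣ ((s : ℤ) - (i : ℤ))
                · have : δ s j = 0 := IH (s : ℕ) (hiN ▸ hsi) s j rfl (key3 s i j hij hd)
                  simp [this]
                · have : δ s i = 0 := IH (s : ℕ) (hiN ▸ hsi) s i rfl hd
                  simp [Matrix.conjTranspose_apply, this]
              · simp [Matrix.conjTranspose_apply, hupper s i hsi]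
            · intro hi; exact absurd (Finset.mem_univ i) hi
          rw [hsum] at hMij
          have hne : δ i i ≠ 0 := fun h0 => by
            have := (hdiag i).1; rw [h0] at this; simp at this
          have : (δ.conjTranspose) i i ≠ 0 := by
            simpa [Matrix.conjTranspose_apply] using star_ne_zero.mpr hne
          exact (mul_eq_zero.mp hMij).resolve_left this
    intro i j hij
    exact key (i : ℕ) i j rfl hij
end
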